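/- arXiv:math/0111059 — 2 statements merged into one kernel-verified Lean document; each statement's English description precedes it below -/
import Mathlib

section
/- For all integers n ≥ k ≥ 1 and every π ∈ P(n,k), one has mak'(π) = lmak(π), i.e. lob(π) + rcb(π) = n(k−1) − (los(π) + rcs(π)). -/
open Finset Polynomial

/-- A partition of `[n] = {1,…,n}` into `k` nonempty blocks `B₁-⋯-B_k`, indexed so that
`min B₁ < ⋯ < min B_k`, encoded by its restricted-growth word `w : Fin n → Fin k`
(the element `i+1` of `[n]` lies in the block `B_{w i + 1}`). -/
structure SetPartition (n k : ℕ) where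
  w : Fin n → Fin k
  surj : Function.Surjective w
  rgf : ∀ i : Fin n, ∀ c : Fin k, c < w i → ∃ j : Fin n, j < i ∧ w j = c

namespace SetPartition

variable {n k : ℕ}

instance : DecidableEq (SetPartition n k) := fun a b =>
  decidable_of_iff (a.w = b.w) (by cases a; cases b; simp)

noncomputable instance : Fintype (SetPartition n k) :=
  Fintype.ofInjective (fun π => π.w) (fun a b h => by cases a; cases b; simp_all)

/-- The set of openers (smallest elements of their blocks). -/
def openers (π : SetPartition n k) : Finset (Fin n) :=
  univ.filter fun i => ∀ j, j < i → π.w j ≠ π.w i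

/-- The set of closers (largest elements of their blocks). -/
def closers (π : SetPartition n k) : Finset (Fin n) :=
  univ.filter fun i => ∀ j, i < j → π.w j ≠ π.w i

/-- Closers that are not openers (`F_s`). -/
def closersOnly (π : SetPartition n k) : Finset (Fin n) := π.closers \ π.openers

/-- Openers that are not closers (`O_s`). -/
def openersOnly (π : SetPartition n k) : Finset (Fin n) := π.openers \ π.closers

/-- Elements that are neither openers nor closers (`P`, the transients). -/
def transients (π : SetPartition n k) : Finset (Fin n) :=
  univ \ (π.openers ∪ π.closers)

def ros (π : SetPartition n k) : ℕ :=
  ∑ i, (π.openers.filter fun j => j < i ∧ π.w i < π.w j).card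
def rob (π : SetPartition n k) : ℕ :=
  ∑ i, (π.openers.filter fun j => i < j ∧ π.w i < π.w j).card
def rcs (π : SetPartition n k) : ℕ :=
  ∑ i, (π.closers.filter fun j => j < i ∧ π.w i < π.w j).card
def rcb (π : SetPartition n k) : ℕ :=
  ∑ i, (π.closers.filter fun j => i < j ∧ π.w i < π.w j).card
def los (π : SetPartition n k) : ℕ :=
  ∑ i, (π.openers.filter fun j => j < i ∧ π.w j < π.w i).card
def lob (π : SetPartition n k) : ℕ :=
  ∑ i, (π.openers.filter fun j => i < j ∧ π.w j < π.w i).card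
def lcs (π : SetPartition n k) : ℕ :=
  ∑ i, (π.closers.filter fun j => j < i ∧ π.w j < π.w i).card
def lcb (π : SetPartition n k) : ℕ :=
  ∑ i, (π.closers.filter fun j => i < j ∧ π.w j < π.w i).card

def mak (π : SetPartition n k) : ℕ := π.ros + π.lcs
def mak' (π : SetPartition n k) : ℕ := π.lob + π.rcb
def lmak (π : SetPartition n k) : ℤ :=
  (n : ℤ) * ((k : ℤ) - 1) - ((π.los : ℤ) + (π.rcs : ℤ))
def lmak' (π : SetPartition n k) : ℤ :=
  (n : ℤ) * ((k : ℤ) - 1) - ((π.lcb : ℤ) + (π.rob : ℤ))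

/-- `rinv(b,π) = #{a : a < b, w_a > w_b}`. -/
def rinv (π : SetPartition n k) (b : Fin n) : ℕ :=
  (univ.filter fun a => a < b ∧ π.w b < π.w a).card

/-- `nrinv(b,π) = #{a : a > b, w_a > w_b}`. -/
def nrinv (π : SetPartition n k) (b : Fin n) : ℕ :=
  (univ.filter fun a => b < a ∧ π.w b < π.w a).card

/-- `linv(b,π) = #{a : a > b, w_a < w_b}`. -/
def linv (π : SetPartition n k) (b : Fin n) : ℕ :=
  (univ.filter fun a => b < a ∧ π.w a < π.w b).card

/-- `rinv(X,π) = Σ_{b ∈ X} rinv(b,π)`. -/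
def rinvSet (π : SetPartition n k) (X : Finset (Fin n)) : ℕ := ∑ b ∈ X, π.rinv b

/-- `linv(X,π) = Σ_{b ∈ X} linv(b,π)`. -/
def linvSet (π : SetPartition n k) (X : Finset (Fin n)) : ℕ := ∑ b ∈ X, π.linv b

/-- `g(B_c)`: the largest element of the block with index `c`. -/
def blockMax (π : SetPartition n k) (c : Fin k) : Fin n :=
  (univ.filter fun i => π.w i = c).max' (by
    obtain ⟨i, hi⟩ := π.surj c
    exact ⟨i, mem_filter.2 ⟨mem_univ i, hi⟩⟩)

/-- The block with index `c` is incomplete at stage `m`, i.e. it meets the first `m`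
elements of `[n]` but is not contained in them. -/
def IncompleteAt (π : SetPartition n k) (m : ℕ) (c : Fin k) : Prop :=
  (∃ j : Fin n, (j : ℕ) < m ∧ π.w j = c) ∧ ∃ j : Fin n, m ≤ (j : ℕ) ∧ π.w j = c

instance (π : SetPartition n k) (m : ℕ) : DecidablePred (π.IncompleteAt m) := fun c =>
  inferInstanceAs (Decidable
    ((∃ j : Fin n, (j : ℕ) < m ∧ π.w j = c) ∧ ∃ j : Fin n, m ≤ (j : ℕ) ∧ π.w j = c))

/-- `l_i(π)`: the number of blocks incomplete at stage `i-1`; here the element `i` of `[n]`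
is represented by the index `i - 1 : Fin n`, so the first `i - 1` elements are those with
index `< i`. -/
def lTrace (π : SetPartition n k) (i : Fin n) : ℕ :=
  (univ.filter fun c => π.IncompleteAt (i : ℕ) c).card

/-- `γ_i(π)`: one plus the number of blocks incomplete at stage `i` lying to the left of the
block containing `i`. -/
def gammaTrace (π : SetPartition n k) (i : Fin n) : ℕ :=
  1 + (univ.filter fun c => π.IncompleteAt ((i : ℕ) + 1) c ∧ c < π.w i).card

end SetPartition

/-- The `q`-Stirling numbers of the second kind `S_q(n,k) ∈ ℤ[q]`, with
`S_q(n,k) = q^{k-1} S_q(n-1,k-1) + [k]_q S_q(n-1,k)`, `S_q(0,0) = 1`, and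
`S_q(n,k) = 0` when exactly one of `n,k` is zero (whence also for `k > n`). -/
noncomputable def qStirling : ℕ → ℕ → Polynomial ℤ
  | 0, 0 => 1
  | 0, _ + 1 => 0
  | _ + 1, 0 => 0
  | n + 1, k + 1 =>
      X ^ k * qStirling n k + (∑ i ∈ Finset.range (k + 1), X ^ i) * qStirling n (k + 1)

/-!
Restricted to the openers, and likewise to the closers, `w` is a bijection onto the block
indices. So for each `i` the openers `j` with `w j < w i` number `w i`, and the closers `j` with
`w i < w j` number `k - 1 - w i`; none of them is `i` itself, and splitting both counts at `i`
gives `los_i + lob_i + rcs_i + rcb_i = k - 1`. Summing over the `n` elements `i` proves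
`lob + rcb + los + rcs = n (k - 1)`.
-/

theorem Finset.card_filter_comp_of_injOn {α β : Type*} [Fintype β] [DecidableEq β]
    {s : Finset α} {f : α → β} (hinj : Set.InjOn f s) (hsurj : ∀ b, ∃ a ∈ s, f a = b)
    (p : β → Prop) [DecidablePred p] :
    #{a ∈ s | p (f a)} = #{b | p b} := by
  have himage : s.image f = univ := eq_univ_of_forall fun b => by simpa using hsurj b
  rw [← card_image_of_injOn (hinj.mono (coe_subset.2 (filter_subset _ _))),
    ← filter_image, himage]

theorem Finset.card_filter_lt_add_card_filter_gt {α : Type*} [LinearOrder α] (s : Finset α)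
    (q : α → Prop) [DecidablePred q] {i : α} (hi : ¬ q i) :
    #{j ∈ s | j < i ∧ q j} + #{j ∈ s | i < j ∧ q j} = #{j ∈ s | q j} := by
  rw [← card_filter_add_card_filter_not (s := {j ∈ s | q j}) (· < i), filter_filter,
    filter_filter]
  congr 2 <;> refine filter_congr fun j _ => ?_
  · exact and_comm
  · have hj : q j → j ≠ i := by rintro hq rfl; exact hi hq
    constructor
    · exact fun ⟨hij, hq⟩ => ⟨hq, hij.not_gt⟩
    · exact fun ⟨hq, hij⟩ => ⟨(not_lt.1 hij).lt_of_ne' (hj hq), hq⟩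

namespace SetPartition

variable {n k : ℕ} (π : SetPartition n k)

theorem injOn_w_openers : Set.InjOn π.w π.openers := by
  intro a ha b hb hab
  by_contra hne
  rcases lt_or_gt_of_ne hne with h | h
  exacts [(mem_filter.1 hb).2 a h hab, (mem_filter.1 ha).2 b h hab.symm]

theorem injOn_w_closers : Set.InjOn π.w π.closers := by
  intro a ha b hb hab
  by_contra hne
  rcases lt_or_gt_of_ne hne with h | h
  exacts [(mem_filter.1 ha).2 b h hab.symm, (mem_filter.1 hb).2 a h hab]

theorem nonempty_block (c : Fin k) : ({i | π.w i = c} : Finset (Fin n)).Nonempty := by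
  obtain ⟨i, hi⟩ := π.surj c
  exact ⟨i, by simpa using hi⟩

theorem exists_mem_openers_w_eq (c : Fin k) : ∃ j ∈ π.openers, π.w j = c := by
  have hmem := mem_filter.1 (min'_mem _ (π.nonempty_block c))
  refine ⟨_, mem_filter.2 ⟨mem_univ _, fun j hj hjw => ?_⟩, hmem.2⟩
  exact (min'_le _ j (by simpa [hmem.2] using hjw)).not_gt hj

theorem exists_mem_closers_w_eq (c : Fin k) : ∃ j ∈ π.closers, π.w j = c := by
  have hmem := mem_filter.1 (max'_mem _ (π.nonempty_block c))
  refine ⟨_, mem_filter.2 ⟨mem_univ _, fun j hj hjw => ?_⟩, hmem.2⟩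
  exact (le_max' _ j (by simpa [hmem.2] using hjw)).not_gt hj

theorem card_openers_filter_w_lt (c : Fin k) : #{j ∈ π.openers | π.w j < c} = c := by
  rw [card_filter_comp_of_injOn π.injOn_w_openers π.exists_mem_openers_w_eq (· < c),
    filter_gt_eq_Iio, Fin.card_Iio]

theorem card_closers_filter_lt_w (c : Fin k) : #{j ∈ π.closers | c < π.w j} = k - 1 - c := by
  rw [card_filter_comp_of_injOn π.injOn_w_closers π.exists_mem_closers_w_eq (c < ·),
    filter_lt_eq_Ioi, Fin.card_Ioi]

theorem lob_add_rcb_add_los_add_rcs :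
    (π.lob + π.rcb + π.los + π.rcs : ℤ) = n * ((k : ℤ) - 1) := by
  have hcoord (i : Fin n) :
      (#{j ∈ π.openers | i < j ∧ π.w j < π.w i} + #{j ∈ π.closers | i < j ∧ π.w i < π.w j}
        + #{j ∈ π.openers | j < i ∧ π.w j < π.w i}
        + #{j ∈ π.closers | j < i ∧ π.w i < π.w j} : ℤ) = k - 1 := by
    have hopen := card_filter_lt_add_card_filter_gt π.openers (π.w · < π.w i) (lt_irrefl _)
    have hclose := card_filter_lt_add_card_filter_gt π.closers (π.w i < π.w ·) (lt_irrefl _)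
    rw [card_openers_filter_w_lt] at hopen
    rw [card_closers_filter_lt_w] at hclose
    have hwi := (π.w i).isLt
    omega
  simp only [lob, rcb, los, rcs]
  push_cast
  rw [← sum_add_distrib, ← sum_add_distrib, ← sum_add_distrib, sum_congr rfl fun i _ => hcoord i]
  simp [mul_sub]

end SetPartition

theorem mak'_eq_lmak_general (n k : ℕ) (π : SetPartition n k) :
    ((π.lob : ℤ) + π.rcb = (n : ℤ) * ((k : ℤ) - 1) - ((π.los : ℤ) + π.rcs)) ∧
    (π.mak' : ℤ) = π.lmak := by
  have htotal := π.lob_add_rcb_add_los_add_rcs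
  refine ⟨by linarith, ?_⟩
  simp only [SetPartition.mak', SetPartition.lmak, Nat.cast_add]
  linarith

/-- For all integers `n ≥ k ≥ 1` and every `π ∈ P(n,k)`,
`mak'(π) = lmak(π)`, i.e. `lob(π) + rcb(π) = n(k-1) - (los(π) + rcs(π))`. -/
theorem mak'_eq_lmak (n k : ℕ) (hk : 1 ≤ k) (hkn : k ≤ n) (π : SetPartition n k) :
    ((π.lob : ℤ) + π.rcb = (n : ℤ) * ((k : ℤ) - 1) - ((π.los : ℤ) + π.rcs)) ∧
    (π.mak' : ℤ) = π.lmak :=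
  mak'_eq_lmak_general n k π
end

section
/- For all integers n ≥ k ≥ 1 and every π ∈ P(n,k): mak'(π) = Σ_{i ∈ F_s(π) ∪ P(π)} (k − γ_i(π)) + Σ_{i ∈ O(π)} (k − 1 − l_i(π)) − Σ_{i=1}^{n} #{a ∈ F(π) : a < i}. -/
/-! Because the word of `π` is a restricted growth function, the opener of a block lies to the
left of every element of a later block, so `lob(π) = 0` and `mak'(π) = Σ_i rcb_i(π)`.
Identify each closer with the block it closes. Relative to an element `i`, the `k` blocks then
split into the block of `i`, the `γ_i - 1` blocks to its left that close after `i`, the `rcb_i`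
blocks to its right that close after `i`, and the blocks closed before `i`. Hence
`rcb_i = k - γ_i - #{a ∈ F : a < i}`, and for an opener `i` the blocks incomplete at stage
`i - 1` are exactly those to its left closing after `i`, so `γ_i = l_i + 1`. -/

open Finset Polynomial

namespace SetPartition

variable {n k : ℕ} (π : SetPartition n k)

theorem lt_of_mem_openers_of_w_lt {i j : Fin n} (hj : j ∈ π.openers) (h : π.w j < π.w i) :
    j < i := by
  obtain ⟨j', hj'i, hj'⟩ := π.rgf i (π.w j) h
  refine lt_of_le_of_lt (not_lt.mp fun hlt => ?_) hj'i
  exact (mem_filter.mp hj).2 j' hlt hj'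

theorem lob_eq_zero : π.lob = 0 := by
  refine sum_eq_zero fun i _ => card_eq_zero.mpr <| filter_eq_empty_iff.mpr ?_
  rintro j hj ⟨hij, hw⟩
  exact lt_asymm hij (π.lt_of_mem_openers_of_w_lt hj hw)

theorem w_blockMax (c : Fin k) : π.w (π.blockMax c) = c :=
  (mem_filter.mp (max'_mem (univ.filter fun i => π.w i = c) _)).2

theorem le_blockMax {c : Fin k} {j : Fin n} (h : π.w j = c) : j ≤ π.blockMax c :=
  le_max' (univ.filter fun i => π.w i = c) j (mem_filter.mpr ⟨mem_univ _, h⟩)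

theorem blockMax_injective : Function.Injective π.blockMax :=
  Function.LeftInverse.injective π.w_blockMax

theorem blockMax_ne_of_ne_w {c : Fin k} {i : Fin n} (hc : c ≠ π.w i) : π.blockMax c ≠ i :=
  fun h => hc (h ▸ (π.w_blockMax c).symm)

theorem closers_eq_image_blockMax : π.closers = univ.image π.blockMax := by
  ext i
  simp only [closers, mem_filter, mem_univ, true_and, mem_image]
  constructor
  · intro hi
    refine ⟨π.w i, ((π.le_blockMax rfl).eq_of_not_lt fun hlt => ?_).symm⟩
    exact hi _ hlt (π.w_blockMax _)
  · rintro ⟨c, rfl⟩ j hlt hw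
    exact not_le.mpr hlt (π.le_blockMax (hw.trans (π.w_blockMax c)))

theorem card_filter_closers (p : Fin n → Prop) [DecidablePred p] :
    (π.closers.filter p).card = (univ.filter fun c => p (π.blockMax c)).card := by
  rw [closers_eq_image_blockMax, filter_image, card_image_of_injective _ π.blockMax_injective]

theorem incompleteAt_iff (m : ℕ) (c : Fin k) :
    π.IncompleteAt m c ↔ (∃ j : Fin n, (j : ℕ) < m ∧ π.w j = c) ∧ m ≤ π.blockMax c := by
  refine and_congr_right fun _ => ⟨?_, fun h => ⟨_, h, π.w_blockMax c⟩⟩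
  rintro ⟨j, hj, rfl⟩
  exact hj.trans (π.le_blockMax rfl)

theorem incompleteAt_succ_iff_of_lt_w {i : Fin n} {c : Fin k} (hc : c < π.w i) :
    π.IncompleteAt (i + 1) c ↔ i < π.blockMax c := by
  obtain ⟨j, hji, hj⟩ := π.rgf i c hc
  rw [incompleteAt_iff, Fin.lt_def]
  exact and_iff_right ⟨j, by omega, hj⟩

theorem incompleteAt_iff_of_mem_openers {i : Fin n} (hi : i ∈ π.openers) (c : Fin k) :
    π.IncompleteAt i c ↔ c < π.w i ∧ i < π.blockMax c := by
  rw [incompleteAt_iff]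
  constructor
  · rintro ⟨⟨j, hji, rfl⟩, hle⟩
    have hne : π.w j ≠ π.w i := (mem_filter.mp hi).2 j hji
    have hlt : π.w j < π.w i :=
      hne.lt_of_le (not_lt.mp fun h => lt_asymm hji (π.lt_of_mem_openers_of_w_lt hi h))
    exact ⟨hlt, lt_of_le_of_ne hle (π.blockMax_ne_of_ne_w hlt.ne).symm⟩
  · rintro ⟨hc, hlt⟩
    obtain ⟨j, hji, hj⟩ := π.rgf i c hc
    exact ⟨⟨j, hji, hj⟩, le_of_lt hlt⟩

theorem gammaTrace_eq_one_add_card (i : Fin n) :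
    π.gammaTrace i = 1 + (univ.filter fun c => c < π.w i ∧ i < π.blockMax c).card := by
  unfold gammaTrace
  congr 2
  exact filter_congr fun c _ => by
    rw [and_comm, and_congr_right_iff]
    exact π.incompleteAt_succ_iff_of_lt_w

theorem gammaTrace_eq_lTrace_add_one {i : Fin n} (hi : i ∈ π.openers) :
    π.gammaTrace i = π.lTrace i + 1 := by
  rw [gammaTrace_eq_one_add_card, lTrace, add_comm,
    filter_congr fun c _ => π.incompleteAt_iff_of_mem_openers hi c]

def rcbAt (i : Fin n) : ℕ := (π.closers.filter fun j => i < j ∧ π.w i < π.w j).card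

def closersBelow (i : Fin n) : ℕ := (π.closers.filter fun a => a < i).card

theorem rcbAt_add_gammaTrace_add_closersBelow (i : Fin n) :
    π.rcbAt i + π.gammaTrace i + π.closersBelow i = k := by
  have hblock (c : Fin k) : (if i < π.blockMax c ∧ π.w i < c then 1 else 0) +
      ((if c = π.w i then 1 else 0) + (if c < π.w i ∧ i < π.blockMax c then 1 else 0)) +
      (if π.blockMax c < i then 1 else 0) = 1 := by
    rcases eq_or_ne c (π.w i) with rfl | hne
    · simp [not_lt.mpr (π.le_blockMax (c := π.w i) rfl)]
    · rcases hne.lt_or_gt with hc | hc <;>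
        rcases (π.blockMax_ne_of_ne_w hne).lt_or_gt with h | h <;>
        simp [hne, hc, h, not_lt.mpr hc.le, not_lt.mpr h.le]
  calc π.rcbAt i + π.gammaTrace i + π.closersBelow i
      = ∑ c : Fin k, ((if i < π.blockMax c ∧ π.w i < c then 1 else 0) +
          ((if c = π.w i then 1 else 0) + (if c < π.w i ∧ i < π.blockMax c then 1 else 0)) +
          (if π.blockMax c < i then 1 else 0)) := by
        rw [rcbAt, closersBelow, card_filter_closers, card_filter_closers,
          gammaTrace_eq_one_add_card]
        simp only [w_blockMax, card_filter, sum_add_distrib, sum_ite_eq', mem_univ, if_true]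
    _ = k := by simp [hblock]

end SetPartition

theorem mak'_eq_trace_formula_general (n k : ℕ) (π : SetPartition n k) :
    (π.mak' : ℤ) =
      (∑ i ∈ π.closersOnly ∪ π.transients, ((k : ℤ) - (π.gammaTrace i : ℤ))) +
      (∑ i ∈ π.openers, ((k : ℤ) - 1 - (π.lTrace i : ℤ))) -
      ∑ i : Fin n, ((π.closers.filter fun a => a < i).card : ℤ) := by
  have hsets : π.closersOnly ∪ π.transients = univ \ π.openers := by
    ext i
    simp only [SetPartition.closersOnly, SetPartition.transients, mem_union, mem_sdiff, mem_univ,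
      true_and]
    tauto
  have hrcb (i : Fin n) :
      (π.rcbAt i : ℤ) = k - π.gammaTrace i - π.closersBelow i := by
    have := π.rcbAt_add_gammaTrace_add_closersBelow i
    omega
  calc (π.mak' : ℤ) = ∑ i, (π.rcbAt i : ℤ) := by
        simp [SetPartition.mak', SetPartition.lob_eq_zero, SetPartition.rcb, SetPartition.rcbAt]
    _ = ∑ i, ((k : ℤ) - π.gammaTrace i) - ∑ i, (π.closersBelow i : ℤ) := by
        simp only [hrcb, sum_sub_distrib]
    _ = _ := by
        rw [hsets, ← sum_sdiff (subset_univ π.openers)]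
        congr 2
        refine sum_congr rfl fun i hi => ?_
        rw [π.gammaTrace_eq_lTrace_add_one hi]
        push_cast
        ring

/-- For all integers `n ≥ k ≥ 1` and every `π ∈ P(n,k)`:
`mak'(π) = Σ_{i ∈ F_s(π) ∪ P(π)} (k - γ_i(π)) + Σ_{i ∈ O(π)} (k - 1 - l_i(π))
           - Σ_{i=1}^n #{a ∈ F(π) : a < i}`. -/
theorem mak'_eq_trace_formula (n k : ℕ) (hk : 1 ≤ k) (hkn : k ≤ n) (π : SetPartition n k) :
    (π.mak' : ℤ) =
      (∑ i ∈ π.closersOnly ∪ π.transients, ((k : ℤ) - (π.gammaTrace i : ℤ))) +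
      (∑ i ∈ π.openers, ((k : ℤ) - 1 - (π.lTrace i : ℤ))) -
      ∑ i : Fin n, ((π.closers.filter fun a => a < i).card : ℤ) :=
  mak'_eq_trace_formula_general n k π
end
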